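/- arXiv:1311.1264 — 8 statements merged into one kernel-verified Lean document; each statement's English description precedes it below -/
import Mathlib

section
/- Let p₀ ∈ (0,1) and define a sequence (p_m)_{m∈ℕ} by p_{m+1} = p_m(1 − p₀)/(1 − p_m·p₀). Then p_m → 0 as m → ∞; consequently, for any real numbers f_a, f_b, c with f_b < c, there exists M such that for all m ≥ M, p_m·f_a + (1 − p_m)·f_b < c. -/
/-!
A failed link is Bayesian evidence with likelihood ratio `1 - p₀` against the agent being of
high value, so each update multiplies the odds `p / (1 - p)` by `1 - p₀`. The odds therefore
decay geometrically, and since `p ≤ p / (1 - p)` the posterior itself tends to `0`; the expected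
benefit then tends to `f_b < c`.
-/

open Filter Topology Set

noncomputable def odds (x : ℝ) : ℝ := x / (1 - x)

lemma le_odds {x : ℝ} (h0 : 0 ≤ x) (h1 : x < 1) : x ≤ odds x :=
  le_div_self h0 (by linarith) (by linarith)

/-- Posterior of `x` after an observation whose likelihood ratio (high type against low type)
is `1 - a`. -/
noncomputable def bayesUpdate (a x : ℝ) : ℝ := x * (1 - a) / (1 - x * a)

lemma one_sub_mul_pos_of_mem_Ioo {a x : ℝ} (ha : a ≤ 1) (hx : x ∈ Ioo 0 1) : 0 < 1 - x * a := by
  nlinarith [hx.1, hx.2]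

lemma bayesUpdate_mem_Ioo {a x : ℝ} (ha : a < 1) (hx : x ∈ Ioo 0 1) :
    bayesUpdate a x ∈ Ioo 0 1 := by
  have hden := one_sub_mul_pos_of_mem_Ioo ha.le hx
  refine ⟨div_pos (mul_pos hx.1 (by linarith)) hden, (div_lt_one hden).2 ?_⟩
  linarith [hx.2]

lemma odds_bayesUpdate {a x : ℝ} (ha : a ≤ 1) (hx : x ∈ Ioo 0 1) :
    odds (bayesUpdate a x) = (1 - a) * odds x := by
  have hden := (one_sub_mul_pos_of_mem_Ioo ha hx).ne'
  have hx1 : 1 - x ≠ 0 := by linarith [hx.2]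
  have hone_sub : 1 - bayesUpdate a x = (1 - x) / (1 - x * a) := by
    unfold bayesUpdate
    field_simp
    ring
  rw [odds, hone_sub, bayesUpdate, odds]
  field_simp

section Iterate

variable {p : ℕ → ℝ} {a : ℝ}

lemma mem_Ioo_of_bayesUpdate (ha : a < 1) (hp0 : p 0 ∈ Ioo 0 1)
    (hrec : ∀ m, p (m + 1) = bayesUpdate a (p m)) (m : ℕ) : p m ∈ Ioo 0 1 := by
  induction m with
  | zero => exact hp0
  | succ m ih => exact hrec m ▸ bayesUpdate_mem_Ioo ha ih

lemma odds_eq_pow_mul_of_bayesUpdate (ha : a < 1) (hp0 : p 0 ∈ Ioo 0 1)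
    (hrec : ∀ m, p (m + 1) = bayesUpdate a (p m)) (m : ℕ) :
    odds (p m) = (1 - a) ^ m * odds (p 0) := by
  induction m with
  | zero => simp
  | succ m ih =>
    rw [hrec m, odds_bayesUpdate ha.le (mem_Ioo_of_bayesUpdate ha hp0 hrec m), ih, pow_succ]
    ring

lemma tendsto_zero_of_bayesUpdate (ha0 : 0 < a) (ha1 : a < 1) (hp0 : p 0 ∈ Ioo 0 1)
    (hrec : ∀ m, p (m + 1) = bayesUpdate a (p m)) : Tendsto p atTop (𝓝 0) := by
  have hodds : Tendsto (fun m => (1 - a) ^ m * odds (p 0)) atTop (𝓝 0) := by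
    simpa using (tendsto_pow_atTop_nhds_zero_of_lt_one (by linarith) (by linarith)).mul_const
      (odds (p 0))
  refine squeeze_zero (fun m => (mem_Ioo_of_bayesUpdate ha1 hp0 hrec m).1.le) (fun m => ?_) hodds
  have hpm := mem_Ioo_of_bayesUpdate ha1 hp0 hrec m
  exact odds_eq_pow_mul_of_bayesUpdate ha1 hp0 hrec m ▸ le_odds hpm.1.le hpm.2

end Iterate

lemma eventually_mul_add_one_sub_mul_lt {ι : Type*} {l : Filter ι} {p : ι → ℝ}
    (hp : Tendsto p l (𝓝 0)) {f_a f_b c : ℝ} (hbc : f_b < c) :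
    ∀ᶠ i in l, p i * f_a + (1 - p i) * f_b < c := by
  have hlim : Tendsto (fun i => p i * f_a + (1 - p i) * f_b) l (𝓝 f_b) := by
    simpa using (hp.mul_const f_a).add (((tendsto_const_nhds (x := (1 : ℝ))).sub hp).mul_const f_b)
  exact hlim.eventually (eventually_lt_nhds hbc)

/-- Quantitative conclusion of Proposition 4: the Bayesian posterior `p m` tends
to `0`, so the posterior expected benefit `p m * f_a + (1 - p m) * f_b` from a
link eventually falls below the cost `c` whenever `f_b < c`. -/
theorem bayesian_posterior_tendsto_zero
    (p : ℕ → ℝ) (h0 : 0 < p 0) (h1 : p 0 < 1)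
    (hrec : ∀ m : ℕ, p (m + 1) = p m * (1 - p 0) / (1 - p m * p 0)) :
    Tendsto p atTop (nhds 0) ∧
      ∀ f_a f_b c : ℝ, f_b < c →
        ∃ M : ℕ, ∀ m : ℕ, M ≤ m → p m * f_a + (1 - p m) * f_b < c := by
  have hp : Tendsto p atTop (𝓝 0) := tendsto_zero_of_bayesUpdate h0 h1 ⟨h0, h1⟩ hrec
  exact ⟨hp, fun _ _ _ hbc => eventually_atTop.1 (eventually_mul_add_one_sub_mul_lt hp hbc)⟩
end

section
/- Let G be a simple undirected graph on a finite vertex set V, let i ∈ V, let L be a set of edges of G all incident to i, and let e be an edge of G incident to i with e ∉ L. Then u_i(G − e) − u_i(G) ≥ u_i((G − L) − e) − u_i(G − L). -/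
open scoped Classical

/-- Agent `i`'s payoff in network `G`: sum over agents reachable from `i` of
`δ^(dist-1) * f j`, minus `c` times `i`'s degree. -/
noncomputable def payoff {V : Type*} [Fintype V] (G : SimpleGraph V)
    (f : V → ℝ) (δ c : ℝ) (i : V) : ℝ :=
  (∑ j : V, if j ≠ i ∧ G.Reachable i j then δ ^ (G.dist i j - 1) * f j else 0)
    - c * (G.degree i : ℝ)

/-!
Split the payoff into the benefits `b_G(j) = δ ^ (d(i, j) - 1) * f j` from the individual agents
`j` and the link costs. Deleting the link `e` at `i` saves one link cost on both sides of the
inequality, so it suffices to compare benefits agent by agent: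
`b_G(j) + b_{G-L-e}(j) ≤ b_{G-e}(j) + b_{G-L}(j)`.
Benefits only grow with the graph, and a shortest `i`–`j` path in `G` uses at most one link at
`i`: either it avoids `e`, and then `b_G(j) ≤ b_{G-e}(j)`, or it avoids every link of `L`, and
then `b_G(j) ≤ b_{G-L}(j)`.
-/

namespace SimpleGraph

variable {V : Type*}

lemma Walk.IsPath.eq_of_mem_edges_of_start_mem {G : SimpleGraph V} {u v : V} {p : G.Walk u v}
    (hp : p.IsPath) {a b : Sym2 V} (ha : a ∈ p.edges) (hb : b ∈ p.edges) (hua : u ∈ a)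
    (hub : u ∈ b) : a = b := by
  cases p with
  | nil => simp at ha
  | cons hadj r =>
    have hu : u ∉ r.support := ((cons_isPath_iff hadj r).mp hp).2
    have not_mem_tail : ∀ c ∈ r.edges, u ∉ c := fun c hc huc ↦
      hu (r.mem_support_of_mem_edges hc huc)
    rw [edges_cons, List.mem_cons] at ha hb
    rcases ha with rfl | ha
    · rcases hb with rfl | hb
      · rfl
      · exact absurd hub (not_mem_tail b hb)
    · exact absurd hua (not_mem_tail a ha)

lemma degree_deleteEdges_singleton_add_one {G : SimpleGraph V} {i k : V}
    [Fintype (G.neighborSet i)] [Fintype ((G.deleteEdges {s(i, k)}).neighborSet i)]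
    (h : G.Adj i k) : (G.deleteEdges {s(i, k)}).degree i + 1 = G.degree i := by
  have hnbr : (G.deleteEdges {s(i, k)}).neighborFinset i = (G.neighborFinset i).erase k := by
    ext x
    simp only [mem_neighborFinset, deleteEdges_adj, Set.mem_singleton_iff, Finset.mem_erase,
      Sym2.congr_right, and_comm]
  rw [← card_neighborFinset_eq_degree, hnbr,
    Finset.card_erase_add_one ((mem_neighborFinset _ _ _).mpr h), card_neighborFinset_eq_degree]

end SimpleGraph

open SimpleGraph

section Benefit

variable {V : Type*} {G H : SimpleGraph V} {f : V → ℝ} {δ : ℝ} {i j : V}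

noncomputable def benefit (G : SimpleGraph V) (f : V → ℝ) (δ : ℝ) (i j : V) : ℝ :=
  if j ≠ i ∧ G.Reachable i j then δ ^ (G.dist i j - 1) * f j else 0

lemma payoff_eq_sum_benefit [Fintype V] [Fintype (G.neighborSet i)] (c : ℝ) :
    payoff G f δ c i = ∑ j, benefit G f δ i j - c * G.degree i := by
  unfold payoff benefit
  congr!

lemma benefit_nonneg (hf : ∀ v, 0 ≤ f v) (hδ : 0 ≤ δ) : 0 ≤ benefit G f δ i j := by
  unfold benefit
  split
  · exact mul_nonneg (pow_nonneg hδ _) (hf j)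
  · exact le_rfl

variable (hf : ∀ v, 0 ≤ f v) (hδ0 : 0 ≤ δ) (hδ1 : δ ≤ 1)
include hf hδ0 hδ1

lemma benefit_le_of_dist_le
    (h : G.Reachable i j → H.Reachable i j ∧ H.dist i j ≤ G.dist i j) :
    benefit G f δ i j ≤ benefit H f δ i j := by
  by_cases hG : j ≠ i ∧ G.Reachable i j
  · obtain ⟨hH, hdist⟩ := h hG.2
    rw [benefit, benefit, if_pos hG, if_pos ⟨hG.1, hH⟩]
    exact mul_le_mul_of_nonneg_right
      (pow_le_pow_of_le_one hδ0 hδ1 (Nat.sub_le_sub_right hdist 1)) (hf j)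
  · rw [benefit, if_neg hG]
    exact benefit_nonneg hf hδ0

lemma benefit_mono (hGH : G ≤ H) : benefit G f δ i j ≤ benefit H f δ i j :=
  benefit_le_of_dist_le hf hδ0 hδ1 fun hr ↦ ⟨hr.mono hGH, hr.dist_anti hGH⟩

lemma benefit_le_deleteEdges_of_length_eq_dist {s : Set (Sym2 V)} (p : G.Walk i j)
    (hp : p.length = G.dist i j) (hs : ∀ e ∈ p.edges, e ∉ s) :
    benefit G f δ i j ≤ benefit (G.deleteEdges s) f δ i j :=
  benefit_le_of_dist_le hf hδ0 hδ1 fun _ ↦ ⟨⟨p.toDeleteEdges s hs⟩,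
    (dist_le (p.toDeleteEdges s hs)).trans_eq ((Walk.length_transfer _ _).trans hp)⟩

variable {L : Set (Sym2 V)} {e : Sym2 V} (hei : i ∈ e) (hLinc : ∀ e' ∈ L, i ∈ e')
  (heL : e ∉ L)
include hei hLinc heL

lemma benefit_le_deleteEdges_singleton_or_deleteEdges :
    benefit G f δ i j ≤ benefit (G.deleteEdges {e}) f δ i j ∨
      benefit G f δ i j ≤ benefit (G.deleteEdges L) f δ i j := by
  by_cases hr : G.Reachable i j
  · obtain ⟨p, hpath, hlen⟩ := hr.exists_path_of_dist
    by_cases hep : e ∈ p.edges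
    · refine .inr (benefit_le_deleteEdges_of_length_eq_dist hf hδ0 hδ1 p hlen
        fun e' he' he'L ↦ heL ?_)
      exact hpath.eq_of_mem_edges_of_start_mem he' hep (hLinc e' he'L) hei ▸ he'L
    · exact .inl (benefit_le_deleteEdges_of_length_eq_dist hf hδ0 hδ1 p hlen
        fun e' he' he'e ↦ hep (Set.mem_singleton_iff.mp he'e ▸ he'))
  · exact .inl (benefit_le_of_dist_le hf hδ0 hδ1 fun h ↦ absurd h hr)

lemma benefit_add_benefit_deleteEdges_le :
    benefit G f δ i j + benefit ((G.deleteEdges L).deleteEdges {e}) f δ i j ≤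
      benefit (G.deleteEdges {e}) f δ i j + benefit (G.deleteEdges L) f δ i j := by
  have h₁ : benefit ((G.deleteEdges L).deleteEdges {e}) f δ i j ≤
      benefit (G.deleteEdges L) f δ i j :=
    benefit_mono hf hδ0 hδ1 (deleteEdges_le _)
  have h₂ : benefit ((G.deleteEdges L).deleteEdges {e}) f δ i j ≤
      benefit (G.deleteEdges {e}) f δ i j :=
    benefit_mono hf hδ0 hδ1 (deleteEdges_mono (deleteEdges_le _))
  rcases benefit_le_deleteEdges_singleton_or_deleteEdges (G := G) (j := j) hf hδ0 hδ1 hei hLinc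
    heL with h | h <;> linarith

end Benefit

theorem marginal_gain_monotone_general {V : Type*} [Fintype V] (G : SimpleGraph V)
    (f : V → ℝ) (hf : ∀ v, 0 < f v) (δ : ℝ) (hδ0 : 0 < δ) (hδ1 : δ < 1)
    (c : ℝ) (i : V)
    (L : Set (Sym2 V)) (hLinc : ∀ e ∈ L, i ∈ e)
    (e : Sym2 V) (he : e ∈ G.edgeSet) (hei : i ∈ e) (heL : e ∉ L) :
    payoff (G.deleteEdges {e}) f δ c i - payoff G f δ c i ≥
      payoff ((G.deleteEdges L).deleteEdges {e}) f δ c i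
        - payoff (G.deleteEdges L) f δ c i := by
  have hsum := Finset.sum_le_sum fun j (_ : j ∈ Finset.univ) ↦
    benefit_add_benefit_deleteEdges_le (G := G) (j := j) (fun v ↦ (hf v).le) hδ0.le hδ1.le hei
      hLinc heL
  rw [Finset.sum_add_distrib, Finset.sum_add_distrib] at hsum
  obtain ⟨k, rfl⟩ := Sym2.mem_iff_exists.mp hei
  have hdeg := degree_deleteEdges_singleton_add_one (show G.Adj i k from he)
  have hdegL := degree_deleteEdges_singleton_add_one
    (show (G.deleteEdges L).Adj i k from deleteEdges_adj.mpr ⟨he, heL⟩)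
  simp only [payoff_eq_sum_benefit, ← hdeg, ← hdegL, Nat.cast_add, Nat.cast_one]
  linarith

theorem marginal_gain_monotone {V : Type*} [Fintype V] (G : SimpleGraph V)
    (f : V → ℝ) (hf : ∀ v, 0 < f v) (δ : ℝ) (hδ0 : 0 < δ) (hδ1 : δ < 1)
    (c : ℝ) (hc : 0 < c) (i : V)
    (L : Set (Sym2 V)) (hLsub : L ⊆ G.edgeSet) (hLinc : ∀ e ∈ L, i ∈ e)
    (e : Sym2 V) (he : e ∈ G.edgeSet) (hei : i ∈ e) (heL : e ∉ L) :
    payoff (G.deleteEdges {e}) f δ c i - payoff G f δ c i ≥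
      payoff ((G.deleteEdges L).deleteEdges {e}) f δ c i
        - payoff (G.deleteEdges L) f δ c i :=
  marginal_gain_monotone_general G f hf δ hδ0 hδ1 c i L hLinc e he hei heL
end

section
/- Let G and G' be simple undirected graphs on the same finite vertex set V with G a subgraph of G' (every edge of G is an edge of G'). Let i ∈ V and suppose the edges of G incident to i are exactly the edges of G' incident to i. Then u_i(G) ≤ u_i(G'). -/
open scoped Classical

/-! Adding edges shortens distances and makes more agents reachable, so with nonnegative values
and `0 ≤ δ ≤ 1` every term of the benefit sum weakly grows; if no edge at `i` is added, the
link cost is unchanged. -/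

namespace SimpleGraph

variable {V : Type*} {G G' : SimpleGraph V}

theorem neighborSet_eq_of_incidenceSet_eq {v : V} (h : G.incidenceSet v = G'.incidenceSet v) :
    G.neighborSet v = G'.neighborSet v := by
  ext w
  rw [mem_neighborSet, mem_neighborSet, ← mk'_mem_incidenceSet_left_iff,
    ← mk'_mem_incidenceSet_left_iff, h]

theorem degree_eq_of_neighborSet_eq {v : V} [Fintype (G.neighborSet v)]
    [Fintype (G'.neighborSet v)] (h : G.neighborSet v = G'.neighborSet v) :
    G.degree v = G'.degree v := by
  rw [← card_neighborSet_eq_degree, ← card_neighborSet_eq_degree]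
  exact Fintype.card_congr (Equiv.setCongr h)

theorem pow_dist_sub_one_le_of_le {δ : ℝ} (hδ0 : 0 ≤ δ) (hδ1 : δ ≤ 1) (hle : G ≤ G')
    {u v : V} (huv : G.Reachable u v) : δ ^ (G.dist u v - 1) ≤ δ ^ (G'.dist u v - 1) :=
  pow_le_pow_of_le_one hδ0 hδ1 (Nat.sub_le_sub_right (huv.dist_anti hle) 1)

end SimpleGraph

open SimpleGraph

theorem payoff_le_payoff_of_le_of_degree_eq {V : Type*} [Fintype V] {G G' : SimpleGraph V}
    (hle : G ≤ G') {f : V → ℝ} (hf : ∀ v, 0 ≤ f v) {δ : ℝ} (hδ0 : 0 ≤ δ) (hδ1 : δ ≤ 1)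
    (c : ℝ) {i : V} (hdeg : G.degree i = G'.degree i) :
    payoff G f δ c i ≤ payoff G' f δ c i := by
  rw [payoff, payoff, hdeg]
  gcongr with j
  split_ifs with hG hG'
  · exact mul_le_mul_of_nonneg_right (pow_dist_sub_one_le_of_le hδ0 hδ1 hle hG.2) (hf j)
  · exact absurd ⟨hG.1, hG.2.mono hle⟩ hG'
  · exact mul_nonneg (pow_nonneg hδ0 _) (hf j)
  · exact le_rfl

theorem payoff_mono_of_same_incident_edges_general
    {V : Type*} [Fintype V] (G G' : SimpleGraph V) (hsub : G ≤ G')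
    (f : V → ℝ) (hf : ∀ v, 0 < f v) (δ : ℝ) (hδ0 : 0 < δ) (hδ1 : δ < 1)
    (c : ℝ) (i : V)
    (hinc : {e ∈ G.edgeSet | i ∈ e} = {e ∈ G'.edgeSet | i ∈ e}) :
    payoff G f δ c i ≤ payoff G' f δ c i :=
  payoff_le_payoff_of_le_of_degree_eq hsub (fun v ↦ (hf v).le) hδ0.le hδ1.le c
    (degree_eq_of_neighborSet_eq (neighborSet_eq_of_incidenceSet_eq hinc))

theorem payoff_mono_of_same_incident_edges
    {V : Type*} [Fintype V] (G G' : SimpleGraph V) (hsub : G ≤ G')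
    (f : V → ℝ) (hf : ∀ v, 0 < f v) (δ : ℝ) (hδ0 : 0 < δ) (hδ1 : δ < 1)
    (c : ℝ) (hc : 0 < c) (i : V)
    (hinc : {e ∈ G.edgeSet | i ∈ e} = {e ∈ G'.edgeSet | i ∈ e}) :
    payoff G f δ c i ≤ payoff G' f δ c i :=
  payoff_mono_of_same_incident_edges_general G G' hsub f hf δ hδ0 hδ1 c i hinc
end

section
/- Let G be a simple undirected graph on a finite vertex set V. If G is severance-proof, then u_i(G) ≥ 0 for every vertex i. -/
open scoped Classical

/-- `G` is severance-proof: no agent can strictly gain by severing one of its own links. -/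
def SeveranceProof {V : Type*} [Fintype V] (G : SimpleGraph V)
    (f : V → ℝ) (δ c : ℝ) : Prop :=
  ∀ i : V, ∀ e ∈ G.edgeSet, i ∈ e →
    payoff G f δ c i ≥ payoff (G.deleteEdges {e}) f δ c i

/-!
Let `i` have degree `d` and payoff `u = B - c d`, where `B` is its connection benefit. Severing
the link to a neighbour `j` leaves a benefit `B_j` and costs `c (d - 1)`. For each agent `k`
reachable from `i`, every shortest path from `i` to `k` leaves `i` through a single neighbour, so
severing any of the other `d - 1` links does not lengthen the distance to `k`; hence
`∑_j B_j ≥ (d - 1) B` and `∑_j u_j ≥ (d - 1) u`. Severance-proofness gives `u ≥ u_j` for every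
`j`, so `d u ≥ (d - 1) u`, that is `u ≥ 0`.
-/

namespace SimpleGraph

variable {V : Type*} (G : SimpleGraph V)

theorem neighborFinset_deleteEdges_singleton [DecidableEq V] (i j : V) [Fintype (G.neighborSet i)]
    [Fintype ((G.deleteEdges {s(i, j)}).neighborSet i)] :
    (G.deleteEdges {s(i, j)}).neighborFinset i = (G.neighborFinset i).erase j := by
  ext k
  simp only [mem_neighborFinset, deleteEdges_adj, Set.mem_singleton_iff, Finset.mem_erase,
    Sym2.congr_right]
  exact and_comm

theorem degree_deleteEdges_singleton {i j : V} (h : G.Adj i j) [Fintype (G.neighborSet i)]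
    [Fintype ((G.deleteEdges {s(i, j)}).neighborSet i)] :
    ((G.deleteEdges {s(i, j)}).degree i : ℝ) = G.degree i - 1 := by
  rw [← card_neighborFinset_eq_degree, neighborFinset_deleteEdges_singleton,
    Finset.card_erase_of_mem ((G.mem_neighborFinset i j).2 h), card_neighborFinset_eq_degree,
    Nat.cast_pred (G.degree_pos_iff_exists_adj i |>.2 ⟨j, h⟩)]

theorem exists_forall_dist_deleteEdges_le {i k : V} (hik : G.Reachable i k) :
    ∃ b, ∀ j ≠ b, (G.deleteEdges {s(i, j)}).Reachable i k ∧
      (G.deleteEdges {s(i, j)}).dist i k ≤ G.dist i k := by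
  obtain ⟨p, hp, hlen⟩ := hik.exists_path_of_dist
  cases p with
  | nil => exact ⟨i, fun j _ => ⟨Reachable.rfl, by simp⟩⟩
  | @cons _ b _ hib q =>
    refine ⟨b, fun j hjb => ?_⟩
    have hiq : i ∉ q.support := (Walk.cons_isPath_iff hib q).1 hp |>.2
    have havoid : s(i, j) ∉ (Walk.cons hib q).edges := by
      rw [Walk.edges_cons, List.mem_cons, not_or, Sym2.congr_right]
      exact ⟨hjb, fun h => hiq (q.fst_mem_support_of_mem_edges h)⟩
    let p' := (Walk.cons hib q).toDeleteEdge _ havoid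
    refine ⟨p'.reachable, (dist_le p').trans_eq ?_⟩
    rw [← hlen]
    exact Walk.length_transfer _ _

end SimpleGraph

open SimpleGraph

section ConnectionBenefit

variable {V : Type*} [Fintype V] {f : V → ℝ} {δ : ℝ}

noncomputable def connectionBenefit (G : SimpleGraph V) (f : V → ℝ) (δ : ℝ) (i k : V) : ℝ :=
  if k ≠ i ∧ G.Reachable i k then δ ^ (G.dist i k - 1) * f k else 0

theorem payoff_eq_sum_connectionBenefit (G : SimpleGraph V) (c : ℝ) (i : V) :
    payoff G f δ c i = ∑ k, connectionBenefit G f δ i k - c * G.degree i :=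
  rfl

theorem connectionBenefit_nonneg (hf : ∀ v, 0 ≤ f v) (hδ : 0 ≤ δ) (G : SimpleGraph V) (i k : V) :
    0 ≤ connectionBenefit G f δ i k := by
  unfold connectionBenefit
  split_ifs
  exacts [mul_nonneg (pow_nonneg hδ _) (hf k), le_rfl]

theorem connectionBenefit_le_of_dist_le (hf : ∀ v, 0 ≤ f v) (hδ0 : 0 ≤ δ) (hδ1 : δ ≤ 1)
    {G H : SimpleGraph V} {i k : V} (hreach : H.Reachable i k) (hdist : H.dist i k ≤ G.dist i k) :
    connectionBenefit G f δ i k ≤ connectionBenefit H f δ i k := by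
  by_cases hG : k ≠ i ∧ G.Reachable i k
  · rw [connectionBenefit, connectionBenefit, if_pos hG, if_pos ⟨hG.1, hreach⟩]
    exact mul_le_mul_of_nonneg_right
      (pow_le_pow_of_le_one hδ0 hδ1 (Nat.sub_le_sub_right hdist 1)) (hf k)
  · rw [connectionBenefit, if_neg hG]
    exact connectionBenefit_nonneg hf hδ0 H i k

/-- All links of `i` but one can be severed without lowering what `i` gets from `k`. -/
theorem card_sub_one_mul_connectionBenefit_le_sum_deleteEdges (hf : ∀ v, 0 ≤ f v)
    (hδ0 : 0 ≤ δ) (hδ1 : δ ≤ 1) (G : SimpleGraph V) (i k : V) (N : Finset V) :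
    ((N.card : ℝ) - 1) * connectionBenefit G f δ i k ≤
      ∑ j ∈ N, connectionBenefit (G.deleteEdges {s(i, j)}) f δ i k := by
  have hnonneg := connectionBenefit_nonneg hf hδ0
  by_cases hG : G.Reachable i k
  · obtain ⟨b, hb⟩ := G.exists_forall_dist_deleteEdges_le hG
    have hcard : (N.card : ℝ) - 1 ≤ (N.erase b).card := by
      rw [sub_le_iff_le_add]
      exact_mod_cast Nat.le_add_of_sub_le Finset.pred_card_le_card_erase
    calc ((N.card : ℝ) - 1) * connectionBenefit G f δ i k
        ≤ ∑ _j ∈ N.erase b, connectionBenefit G f δ i k := by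
          rw [Finset.sum_const, nsmul_eq_mul]
          exact mul_le_mul_of_nonneg_right hcard (hnonneg G i k)
      _ ≤ ∑ j ∈ N.erase b, connectionBenefit (G.deleteEdges {s(i, j)}) f δ i k :=
          Finset.sum_le_sum fun j hj =>
            connectionBenefit_le_of_dist_le hf hδ0 hδ1 (hb j (Finset.ne_of_mem_erase hj)).1
              (hb j (Finset.ne_of_mem_erase hj)).2
      _ ≤ ∑ j ∈ N, connectionBenefit (G.deleteEdges {s(i, j)}) f δ i k :=
          Finset.sum_le_sum_of_subset_of_nonneg (Finset.erase_subset b N)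
            fun j _ _ => hnonneg _ i k
  · rw [connectionBenefit, if_neg (fun h => hG h.2), mul_zero]
    exact Finset.sum_nonneg fun j _ => hnonneg _ i k

theorem payoff_deleteEdges_singleton {G : SimpleGraph V} {i j : V} (h : G.Adj i j) (c : ℝ) :
    payoff (G.deleteEdges {s(i, j)}) f δ c i =
      ∑ k, connectionBenefit (G.deleteEdges {s(i, j)}) f δ i k - c * (G.degree i - 1) := by
  rw [payoff_eq_sum_connectionBenefit]
  congr 2
  -- `convert` reconciles the classical `Fintype` instance inside `payoff` with the synthesized one
  convert G.degree_deleteEdges_singleton h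

theorem degree_sub_one_mul_payoff_le_sum_payoff_deleteEdges (hf : ∀ v, 0 ≤ f v) (hδ0 : 0 ≤ δ)
    (hδ1 : δ ≤ 1) (G : SimpleGraph V) (c : ℝ) (i : V) :
    ((G.degree i : ℝ) - 1) * payoff G f δ c i ≤
      ∑ j ∈ G.neighborFinset i, payoff (G.deleteEdges {s(i, j)}) f δ c i := by
  have hbenefit : ((G.degree i : ℝ) - 1) * ∑ k, connectionBenefit G f δ i k ≤
      ∑ j ∈ G.neighborFinset i, ∑ k, connectionBenefit (G.deleteEdges {s(i, j)}) f δ i k := by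
    rw [Finset.mul_sum, Finset.sum_comm, ← card_neighborFinset_eq_degree]
    exact Finset.sum_le_sum fun k _ =>
      card_sub_one_mul_connectionBenefit_le_sum_deleteEdges hf hδ0 hδ1 G i k _
  rw [Finset.sum_congr rfl fun j hj =>
      payoff_deleteEdges_singleton ((G.mem_neighborFinset i j).1 hj) c,
    Finset.sum_sub_distrib, Finset.sum_const, card_neighborFinset_eq_degree, nsmul_eq_mul,
    payoff_eq_sum_connectionBenefit]
  linear_combination hbenefit

end ConnectionBenefit

theorem severanceProof_payoff_nonneg_general
    {V : Type*} [Fintype V] (G : SimpleGraph V)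
    (f : V → ℝ) (hf : ∀ v, 0 < f v) (δ : ℝ) (hδ0 : 0 < δ) (hδ1 : δ < 1)
    (c : ℝ)
    (hstable : SeveranceProof G f δ c) :
    ∀ i : V, payoff G f δ c i ≥ 0 := by
  intro i
  have hsever : ∑ j ∈ G.neighborFinset i, payoff (G.deleteEdges {s(i, j)}) f δ c i ≤
      G.degree i * payoff G f δ c i := by
    calc ∑ j ∈ G.neighborFinset i, payoff (G.deleteEdges {s(i, j)}) f δ c i
        ≤ ∑ _j ∈ G.neighborFinset i, payoff G f δ c i :=
          Finset.sum_le_sum fun j hj => hstable i _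
            (G.mem_edgeSet.2 ((G.mem_neighborFinset i j).1 hj)) (Sym2.mem_mk_left i j)
      _ = G.degree i * payoff G f δ c i := by
          rw [Finset.sum_const, card_neighborFinset_eq_degree, nsmul_eq_mul]
  have hsplit := degree_sub_one_mul_payoff_le_sum_payoff_deleteEdges (fun v => (hf v).le) hδ0.le
    hδ1.le G c i
  linarith

theorem severanceProof_payoff_nonneg
    {V : Type*} [Fintype V] (G : SimpleGraph V)
    (f : V → ℝ) (hf : ∀ v, 0 < f v) (δ : ℝ) (hδ0 : 0 < δ) (hδ1 : δ < 1)
    (c : ℝ) (hc : 0 < c)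
    (hstable : SeveranceProof G f δ c) :
    ∀ i : V, payoff G f δ c i ≥ 0 :=
  severanceProof_payoff_nonneg_general G f hf δ hδ0 hδ1 c hstable
end

section
/- Let S be the star graph on a finite vertex set V with center v₀ and n ≥ 2 peripheral vertices, where every edge of S joins v₀ to a peripheral vertex. Suppose f(l) ≥ c for every peripheral vertex l, and f(v₀) + δ·(n − 1)·c ≥ c. Then S is severance-proof, even when f(v₀) < c. -/
open scoped Classical

/-! In a star every vertex reachable from the centre is adjacent to it, so the centre's payoff is
`∑ (f j - c)` over its neighbours, and severing the link to `l` lowers it by `f l - c ≥ 0`.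
A peripheral vertex that severs its only link is left isolated with payoff `0`, whereas in the star
it receives `f v₀` directly and `δ f j ≥ δ c` from each of the other `n - 1` peripheral vertices,
for the cost `c` of a single link. -/

open Finset SimpleGraph

namespace SimpleGraph

variable {V : Type*} {G : SimpleGraph V} {u v : V}

lemma dist_eq_two_iff :
    G.dist u v = 2 ↔ u ≠ v ∧ ¬G.Adj u v ∧ (G.commonNeighbors u v).Nonempty := by
  rw [dist, ENat.toNat_eq_iff two_ne_zero, Nat.cast_ofNat, edist_eq_two_iff]

lemma eq_of_reachable_of_forall_not_adj (h : ∀ w, ¬G.Adj u w) (huv : G.Reachable u v) :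
    u = v := by
  obtain ⟨_ | ⟨hadj, _⟩⟩ := huv
  · rfl
  · exact absurd hadj (h _)

lemma not_adj_deleteEdges_of_forall_adj_eq (hleaf : ∀ w, G.Adj v w → w = u) (w : V) :
    ¬(G.deleteEdges {s(u, v)}).Adj v w := by
  rw [deleteEdges_adj]
  rintro ⟨hadj, hne⟩
  obtain rfl := hleaf w hadj
  exact hne Sym2.eq_swap

end SimpleGraph

section Payoff

variable {V : Type*} [Fintype V] {G : SimpleGraph V} (f : V → ℝ) (δ c : ℝ) {i l : V}

lemma payoff_eq_zero_of_forall_not_adj (h : ∀ j, ¬G.Adj i j) : payoff G f δ c i = 0 := by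
  have hdeg : G.degree i = 0 := by simpa [degree_eq_zero_iff_notMem_support, mem_support]
  rw [payoff, hdeg, Nat.cast_zero, mul_zero, sub_zero]
  refine sum_eq_zero fun j _ => if_neg ?_
  rintro ⟨hji, hr⟩
  exact hji (eq_of_reachable_of_forall_not_adj h hr).symm

lemma payoff_eq_sum_of_forall_reachable_adj (h : ∀ j, j ≠ i → G.Reachable i j → G.Adj i j) :
    payoff G f δ c i = ∑ j, if G.Adj i j then f j - c else 0 := by
  have hterm : ∀ j, (if j ≠ i ∧ G.Reachable i j then δ ^ (G.dist i j - 1) * f j else 0) =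
      if G.Adj i j then f j else 0 := by
    intro j
    by_cases hadj : G.Adj i j
    · rw [if_pos ⟨hadj.ne.symm, hadj.reachable⟩, if_pos hadj, dist_eq_one_iff_adj.mpr hadj,
        Nat.sub_self, pow_zero, one_mul]
    · rw [if_neg hadj, if_neg fun hr => hadj (h j hr.1 hr.2)]
  rw [payoff, sum_congr rfl fun j _ => hterm j, ← sum_filter, ← sum_filter, sum_sub_distrib,
    sum_const, nsmul_eq_mul, ← card_neighborFinset_eq_degree, neighborFinset_eq_filter, mul_comm]

lemma payoff_deleteEdges_le_of_forall_reachable_adj (hil : G.Adj i l)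
    (hleaf : ∀ w, G.Adj l w → w = i) (hclosed : ∀ j, j ≠ i → G.Reachable i j → G.Adj i j)
    (hfl : c ≤ f l) : payoff (G.deleteEdges {s(i, l)}) f δ c i ≤ payoff G f δ c i := by
  have hclosed' : ∀ j, j ≠ i → (G.deleteEdges {s(i, l)}).Reachable i j →
      (G.deleteEdges {s(i, l)}).Adj i j := by
    intro j hji hr
    have hjl : j ≠ l := by
      rintro rfl
      exact hil.ne (eq_of_reachable_of_forall_not_adj
        (not_adj_deleteEdges_of_forall_adj_eq hleaf) hr.symm).symm
    exact (deleteEdges_adj ..).mpr ⟨hclosed j hji (hr.mono (deleteEdges_le _)),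
      by simpa [hil.ne] using hjl⟩
  rw [payoff_eq_sum_of_forall_reachable_adj f δ c hclosed', payoff_eq_sum_of_forall_reachable_adj f δ c hclosed]
  refine sum_le_sum fun j _ => ?_
  by_cases hjl : j = l
  · subst hjl
    rw [if_neg (by simp), if_pos hil]
    linarith
  · have hadj : (G.deleteEdges {s(i, l)}).Adj i j ↔ G.Adj i j := by simp [hjl, hil.ne]
    simp only [hadj, le_refl]

lemma payoff_deleteEdges_eq_zero_of_forall_adj_eq (hleaf : ∀ w, G.Adj l w → w = i) :
    payoff (G.deleteEdges {s(i, l)}) f δ c l = 0 :=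
  payoff_eq_zero_of_forall_not_adj f δ c (not_adj_deleteEdges_of_forall_adj_eq hleaf)

end Payoff

namespace SimpleGraph

variable {V : Type*} {r l : V}

lemma exists_eq_of_mem_edgeSet_starGraph {e : Sym2 V} (he : e ∈ (starGraph r).edgeSet) :
    ∃ l, l ≠ r ∧ e = s(r, l) := by
  induction e using Sym2.ind with
  | _ a b =>
    rw [mem_edgeSet, starGraph_adj] at he
    obtain ⟨hab, rfl | rfl⟩ := he
    · exact ⟨b, hab.symm, rfl⟩
    · exact ⟨a, hab, Sym2.eq_swap⟩

lemma starGraph_dist_eq_two {j : V} (hl : l ≠ r) (hj : j ≠ r) (hlj : l ≠ j) :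
    (starGraph r).dist l j = 2 :=
  dist_eq_two_iff.mpr ⟨hlj, by simp [hl, hj, hlj], r,
    (mem_commonNeighbors _).mpr ⟨starGraph_center_adj' hl.symm, starGraph_center_adj' hj.symm⟩⟩

end SimpleGraph

section Star

variable {V : Type*} [Fintype V] (f : V → ℝ) (δ c : ℝ) {r l : V}

lemma payoff_starGraph_of_ne_center (hl : l ≠ r) :
    payoff (starGraph r) f δ c l = f r + δ * ∑ j ∈ ({l, r}ᶜ : Finset V), f j - c := by
  -- quantified over the instance, since `payoff` uses the classical one
  have hdeg : ∀ inst, @degree V (starGraph r) l inst = 1 := fun _ => by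
    convert degree_starGraph_of_ne_center hl
  rw [payoff, hdeg, ← sum_compl_add_sum {l, r}, sum_pair hl, if_neg (by simp),
    if_pos ⟨hl.symm, ((starGraph_center_adj hl.symm).symm).reachable⟩,
    dist_eq_one_iff_adj.mpr (starGraph_center_adj hl.symm).symm,
    sum_congr rfl (g := fun j => δ * f j), ← mul_sum]
  · simp only [Nat.sub_self, pow_zero, one_mul, Nat.cast_one, mul_one]
    ring
  · intro j hj
    simp only [mem_compl, mem_insert, mem_singleton, not_or] at hj
    rw [if_pos ⟨hj.1, (connected_starGraph r).preconnected l j⟩,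
      starGraph_dist_eq_two hl hj.2 (Ne.symm hj.1), pow_one]

lemma payoff_starGraph_nonneg_of_ne_center (hδ : 0 ≤ δ) (hperiph : ∀ j, j ≠ r → c ≤ f j)
    (hcenter : c ≤ f r + δ * ((Fintype.card V : ℝ) - 2) * c) (hl : l ≠ r) :
    0 ≤ payoff (starGraph r) f δ c l := by
  have hcard : (#({l, r}ᶜ : Finset V) : ℝ) = Fintype.card V - 2 := by
    rw [← card_compl_add_card {l, r}, card_pair hl]
    push_cast
    ring
  have hsum : #({l, r}ᶜ : Finset V) • c ≤ ∑ j ∈ ({l, r}ᶜ : Finset V), f j :=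
    card_nsmul_le_sum _ _ _ fun j hj => hperiph j (by simp_all)
  rw [nsmul_eq_mul, hcard] at hsum
  rw [payoff_starGraph_of_ne_center f δ c hl]
  nlinarith

end Star

theorem star_with_lowValue_center_severanceProof_general
    {V : Type*} [Fintype V] (n : ℕ) (hcard : Fintype.card V = n + 1)
    (f : V → ℝ) (δ : ℝ) (hδ0 : 0 < δ)
    (c : ℝ)
    (v₀ : V) (S : SimpleGraph V)
    (hS : ∀ a b : V, S.Adj a b ↔ (a = v₀ ∧ b ≠ v₀) ∨ (b = v₀ ∧ a ≠ v₀))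
    (hperiph : ∀ l : V, l ≠ v₀ → f l ≥ c)
    (hcenter : f v₀ + δ * ((n : ℝ) - 1) * c ≥ c) :
    SeveranceProof S f δ c := by
  obtain rfl : S = starGraph v₀ := by
    ext a b
    rw [hS, starGraph_adj]
    grind
  rintro i e he hie
  obtain ⟨l, hl, rfl⟩ := exists_eq_of_mem_edgeSet_starGraph he
  have hleaf : ∀ w, (starGraph v₀).Adj l w → w = v₀ := by
    grind [starGraph_adj]
  rcases Sym2.mem_iff.mp hie with rfl | rfl
  · exact payoff_deleteEdges_le_of_forall_reachable_adj f δ c (starGraph_center_adj hl.symm)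
      hleaf (fun j hj _ => starGraph_center_adj hj.symm) (hperiph l hl)
  · rw [payoff_deleteEdges_eq_zero_of_forall_adj_eq f δ c hleaf]
    refine payoff_starGraph_nonneg_of_ne_center f δ c hδ0.le hperiph ?_ hl
    rw [hcard]
    push_cast
    linarith

theorem star_with_lowValue_center_severanceProof
    {V : Type*} [Fintype V] (n : ℕ) (hn : 2 ≤ n) (hcard : Fintype.card V = n + 1)
    (f : V → ℝ) (hf : ∀ v, 0 < f v) (δ : ℝ) (hδ0 : 0 < δ) (hδ1 : δ < 1)
    (c : ℝ) (hc : 0 < c)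
    (v₀ : V) (S : SimpleGraph V)
    (hS : ∀ a b : V, S.Adj a b ↔ (a = v₀ ∧ b ≠ v₀) ∨ (b = v₀ ∧ a ≠ v₀))
    (hperiph : ∀ l : V, l ≠ v₀ → f l ≥ c)
    (hcenter : f v₀ + δ * ((n : ℝ) - 1) * c ≥ c) :
    SeveranceProof S f δ c :=
  star_with_lowValue_center_severanceProof_general n hcard f δ hδ0 c v₀ S hS hperiph hcenter
end

section
/- Let C₅ be the cycle graph on 5 vertices and suppose f(v) = w > 0 for every vertex v. Then for every vertex i and every edge e of C₅ incident to i, u_i(C₅) − u_i(C₅ − e) = (1 + δ − δ² − δ³)·w − c. Consequently, C₅ is severance-proof if and only if (1 + δ − δ² − δ³)·w ≥ c. -/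
open scoped Classical

/-!
In `C₅` every agent sees two neighbours at distance 1 and two agents at distance 2, so its
payoff is `2w + 2δw - 2c`. Severing one of its links turns `C₅` into a path of which the agent
is an end, seeing the other four agents at distances 1, 2, 3, 4, for a payoff of
`(1 + δ + δ² + δ³)w - c`. Distances are certified by a BFS layering: a level function that
grows by at most one along edges bounds the distance from below, and a descending neighbour at every
positive level yields a walk realising it.
-/

namespace SimpleGraph

variable {V : Type*} {G : SimpleGraph V}

theorem Walk.le_add_length_of_adj_le_succ (d : V → ℕ)
    (hd : ∀ a b, G.Adj a b → d b ≤ d a + 1) {u v : V} (p : G.Walk u v) :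
    d v ≤ d u + p.length := by
  induction p with
  | nil => simp
  | cons h p ih =>
    have := hd _ _ h
    rw [Walk.length_cons]
    omega

theorem Reachable.le_add_dist_of_adj_le_succ (d : V → ℕ)
    (hd : ∀ a b, G.Adj a b → d b ≤ d a + 1) {u v : V} (h : G.Reachable u v) :
    d v ≤ d u + G.dist u v := by
  obtain ⟨p, hp⟩ := h.exists_walk_length_eq_dist
  exact hp ▸ p.le_add_length_of_adj_le_succ d hd

theorem exists_walk_length_eq_of_descent (d : V → ℕ) {u : V} (hzero : ∀ v, d v = 0 → v = u)
    (hdesc : ∀ v, d v ≠ 0 → ∃ a, G.Adj a v ∧ d a + 1 = d v) (v : V) :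
    ∃ p : G.Walk u v, p.length = d v := by
  suffices ∀ n v, d v = n → ∃ p : G.Walk u v, p.length = n from this _ v rfl
  intro n
  induction n with
  | zero =>
    intro v hv
    obtain rfl := hzero v hv
    exact ⟨.nil, rfl⟩
  | succ n ih =>
    intro v hv
    obtain ⟨a, hav, ha⟩ := hdesc v (by omega)
    obtain ⟨p, hp⟩ := ih a (by omega)
    exact ⟨p.concat hav, by rw [Walk.length_concat, hp]⟩

theorem reachable_and_dist_eq_of_layers (d : V → ℕ) {u : V} (hzero : ∀ v, d v = 0 ↔ v = u)
    (hlip : ∀ a b, G.Adj a b → d b ≤ d a + 1)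
    (hdesc : ∀ v, d v ≠ 0 → ∃ a, G.Adj a v ∧ d a + 1 = d v) (v : V) :
    G.Reachable u v ∧ G.dist u v = d v := by
  obtain ⟨p, hp⟩ := exists_walk_length_eq_of_descent d (fun v => (hzero v).1) hdesc v
  have hlow := p.reachable.le_add_dist_of_adj_le_succ d hlip
  rw [(hzero u).2 rfl] at hlow
  exact ⟨p.reachable, le_antisymm (hp ▸ dist_le p) (by omega)⟩

end SimpleGraph

theorem payoff_eq_of_dist {V : Type*} [Fintype V] (G : SimpleGraph V) (f : V → ℝ) (δ c : ℝ)
    {i : V} (d : V → ℕ) (hd : ∀ j, G.Reachable i j ∧ G.dist i j = d j) :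
    payoff G f δ c i =
      (∑ j, if j ≠ i then δ ^ (d j - 1) * f j else 0) -
        c * (Finset.univ.filter (d · = 1)).card := by
  have hdeg : G.degree i = (Finset.univ.filter (d · = 1)).card := by
    rw [← G.card_neighborFinset_eq_degree, G.neighborFinset_eq_filter]
    congr 1
    ext j
    simp [← SimpleGraph.dist_eq_one_iff_adj, (hd j).2]
  unfold payoff
  rw [hdeg]
  congr 1
  refine Finset.sum_congr rfl fun j _ => ?_
  simp only [(hd j).1, (hd j).2, and_true]

theorem ZMod.sum_ite_ne_five {M : Type*} [AddCommMonoid M] {σ : ZMod 5} (hσ : σ * σ = 1)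
    (i : ZMod 5) (F : ZMod 5 → M) :
    (∑ j, if j ≠ i then F (σ * (j - i)) else 0) = F 1 + F 2 + F 3 + F 4 := by
  obtain ⟨u, rfl⟩ := IsUnit.of_mul_eq_one σ hσ
  rw [← Equiv.sum_comp ((Units.mulLeft u).trans (Equiv.addLeft i))]
  simp only [Equiv.trans_apply, Units.mulLeft_apply, Equiv.coe_addLeft, ne_eq, add_eq_left,
    add_sub_cancel_left, u.mul_right_eq_zero, ← mul_assoc, hσ, one_mul]
  rw [show (Finset.univ : Finset (ZMod 5)) = {0, 1, 2, 3, 4} from rfl]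
  simp +decide [add_assoc]

def fiveCycleDist (t : ZMod 5) : ℕ := min t.val (5 - t.val)

section FiveCycle

variable {C : SimpleGraph (ZMod 5)} (hC : ∀ a b : ZMod 5, C.Adj a b ↔ a - b = 1 ∨ b - a = 1)
include hC

theorem fiveCycle_dist (i j : ZMod 5) :
    C.Reachable i j ∧ C.dist i j = fiveCycleDist (j - i) := by
  refine SimpleGraph.reachable_and_dist_eq_of_layers (fun j => fiveCycleDist (j - i))
    (by revert i; decide) ?_ ?_ j <;> simp only [hC] <;> revert i <;> decide

/-- Deleting the edge `s(i, i - σ)` leaves the path `i, i + σ, i + 2σ, i + 3σ, i + 4σ`. -/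
theorem fiveCycle_deleteEdge_dist {σ : ZMod 5} (hσ : σ * σ = 1) (i j : ZMod 5) :
    (C.deleteEdges {s(i, i - σ)}).Reachable i j ∧
      (C.deleteEdges {s(i, i - σ)}).dist i j = (σ * (j - i)).val := by
  refine SimpleGraph.reachable_and_dist_eq_of_layers (fun j => (σ * (j - i)).val)
    (by revert σ i; decide) ?_ ?_ j <;>
    simp only [SimpleGraph.deleteEdges_adj, hC, Set.mem_singleton_iff, Sym2.eq_iff] <;>
    revert σ i <;> decide

theorem fiveCycle_exists_edge_eq {i : ZMod 5} {e : Sym2 (ZMod 5)} (he : e ∈ C.edgeSet)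
    (hi : i ∈ e) : ∃ σ : ZMod 5, σ * σ = 1 ∧ e = s(i, i - σ) := by
  obtain ⟨j, rfl⟩ := Sym2.mem_iff_exists.1 hi
  refine ⟨i - j, ?_, by rw [sub_sub_cancel]⟩
  rcases (hC i j).1 (C.mem_edgeSet.1 he) with h | h
  · rw [h, one_mul]
  · rw [← neg_sub, h]
    norm_num

variable {f : ZMod 5 → ℝ} {w : ℝ} (hfw : ∀ v, f v = w) (δ c : ℝ)
include hfw

theorem payoff_fiveCycle (i : ZMod 5) : payoff C f δ c i = 2 * w + 2 * δ * w - 2 * c := by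
  have hdeg : (Finset.univ.filter fun j => fiveCycleDist (j - i) = 1).card = 2 := by
    revert i; decide
  have hsum := ZMod.sum_ite_ne_five (one_mul 1) i fun t => δ ^ (fiveCycleDist t - 1) * w
  simp only [one_mul] at hsum
  rw [payoff_eq_of_dist C f δ c _ (fiveCycle_dist hC i)]
  simp only [hfw, hsum, hdeg]
  norm_num [fiveCycleDist, ZMod.val_one_eq_one_mod, ZMod.val_ofNat]
  ring

theorem payoff_fiveCycle_deleteEdge {σ : ZMod 5} (hσ : σ * σ = 1) (i : ZMod 5) :
    payoff (C.deleteEdges {s(i, i - σ)}) f δ c i = (1 + δ + δ ^ 2 + δ ^ 3) * w - c := by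
  have hdeg : (Finset.univ.filter fun j => (σ * (j - i)).val = 1).card = 1 := by
    revert σ i; decide
  rw [payoff_eq_of_dist _ f δ c _ (fiveCycle_deleteEdge_dist hC hσ i)]
  simp only [hfw, ZMod.sum_ite_ne_five hσ i fun t => δ ^ (t.val - 1) * w, hdeg]
  norm_num [ZMod.val_one_eq_one_mod, ZMod.val_ofNat]
  ring

end FiveCycle

theorem fiveCycle_severanceProof_iff_general
    (C : SimpleGraph (ZMod 5))
    (hC : ∀ a b : ZMod 5, C.Adj a b ↔ a - b = 1 ∨ b - a = 1)
    (f : ZMod 5 → ℝ) (w : ℝ) (hfw : ∀ v, f v = w)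
    (δ : ℝ) (c : ℝ) :
    (∀ i : ZMod 5, ∀ e ∈ C.edgeSet, i ∈ e →
      payoff C f δ c i - payoff (C.deleteEdges {e}) f δ c i
        = (1 + δ - δ ^ 2 - δ ^ 3) * w - c) ∧
    (SeveranceProof C f δ c ↔ (1 + δ - δ ^ 2 - δ ^ 3) * w ≥ c) := by
  have hgain : ∀ i : ZMod 5, ∀ e ∈ C.edgeSet, i ∈ e →
      payoff C f δ c i - payoff (C.deleteEdges {e}) f δ c i
        = (1 + δ - δ ^ 2 - δ ^ 3) * w - c := by
    intro i e he hi
    obtain ⟨σ, hσ, rfl⟩ := fiveCycle_exists_edge_eq hC he hi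
    rw [payoff_fiveCycle hC hfw, payoff_fiveCycle_deleteEdge hC hfw δ c hσ]
    ring
  refine ⟨hgain, fun hsp => ?_, fun hprofitable i e he hi => ?_⟩
  · have h01 : s((0 : ZMod 5), 1) ∈ C.edgeSet := (hC 0 1).2 (Or.inr (sub_zero 1))
    have := hgain 0 _ h01 (Sym2.mem_mk_left 0 1)
    have := hsp 0 _ h01 (Sym2.mem_mk_left 0 1)
    linarith
  · have := hgain i e he hi
    linarith

theorem fiveCycle_severanceProof_iff
    (C : SimpleGraph (ZMod 5))
    (hC : ∀ a b : ZMod 5, C.Adj a b ↔ a - b = 1 ∨ b - a = 1)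
    (f : ZMod 5 → ℝ) (w : ℝ) (hw : 0 < w) (hfw : ∀ v, f v = w)
    (δ : ℝ) (hδ0 : 0 < δ) (hδ1 : δ < 1) (c : ℝ) (hc : 0 < c) :
    (∀ i : ZMod 5, ∀ e ∈ C.edgeSet, i ∈ e →
      payoff C f δ c i - payoff (C.deleteEdges {e}) f δ c i
        = (1 + δ - δ ^ 2 - δ ^ 3) * w - c) ∧
    (SeveranceProof C f δ c ↔ (1 + δ - δ ^ 2 - δ ^ 3) * w ≥ c) :=
  fiveCycle_severanceProof_iff_general C hC f w hfw δ c
end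

section
/- Let P be the path graph on vertices v₁, v₂, …, v_N (N ≥ 2), with edges v_k v_{k+1} for k = 1, …, N−1, and suppose that for every k ∈ {1, …, N−1}, Σ_{l=1}^{k} f(v_l) > c and Σ_{l=k+1}^{N} f(v_l) > c. Then there exists δ₀ ∈ (0,1) such that for every decay factor δ ∈ (δ₀, 1), the path P is severance-proof. -/
open scoped Classical

/-!
At `δ = 1` the payoff of `i` is the total value of the vertices reachable from `i` minus `c` times
its degree. Severing an edge of the path cuts `i` off from the whole far side of that edge, whose
value exceeds `c` by hypothesis, while it saves only `c`: at `δ = 1` every severance is strictly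
unprofitable. Payoffs are polynomials in `δ` and there are finitely many pairs (agent, edge), so
these strict inequalities persist on an interval `(δ₀, 1)`.
-/

open SimpleGraph

namespace SimpleGraph

variable {V : Type*}

lemma degree_deleteEdges_add_one [Fintype V] {G : SimpleGraph V} [DecidableRel G.Adj]
    {i j : V} (hij : G.Adj i j) :
    (G.deleteEdges {s(i, j)}).degree i + 1 = G.degree i := by
  have hnbr : (G.deleteEdges {s(i, j)}).neighborFinset i = (G.neighborFinset i).erase j := by
    ext l
    simp only [mem_neighborFinset, deleteEdges_adj, Set.mem_singleton_iff, Finset.mem_erase,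
      Sym2.eq_iff, true_and, and_comm (a := l ≠ j)]
    constructor
    · rintro ⟨hil, hne⟩
      exact ⟨hil, fun h => hne (Or.inl h)⟩
    · rintro ⟨hil, hne⟩
      exact ⟨hil, fun h => h.elim hne fun h' => hij.ne h'.1⟩
  rw [← card_neighborFinset_eq_degree, ← card_neighborFinset_eq_degree, hnbr,
    Finset.card_erase_add_one (mem_neighborFinset _ _ _ |>.2 hij)]

end SimpleGraph

lemma continuous_payoff {V : Type*} [Fintype V] (G : SimpleGraph V) (f : V → ℝ) (c : ℝ) (i : V) :
    Continuous fun δ : ℝ => payoff G f δ c i := by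
  refine (continuous_finsetSum _ fun j _ => ?_).sub continuous_const
  split_ifs <;> fun_prop

lemma payoff_one {V : Type*} [Fintype V] (G : SimpleGraph V) (f : V → ℝ) (c : ℝ) (i : V) :
    payoff G f 1 c i =
      ∑ j ∈ Finset.univ.filter (fun j => j ≠ i ∧ G.Reachable i j), f j - c * G.degree i := by
  simp only [payoff, one_pow, one_mul, Finset.sum_filter]

lemma payoff_one_lt_of_le {V : Type*} [Fintype V] {G G' : SimpleGraph V} (hle : G' ≤ G)
    (f : V → ℝ) (hf : ∀ v, 0 ≤ f v) (c : ℝ) {i : V} (hdeg : G'.degree i + 1 = G.degree i)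
    (S : Finset V) (hS : ∀ l ∈ S, G.Reachable i l ∧ ¬ G'.Reachable i l)
    (hSc : c < ∑ l ∈ S, f l) :
    payoff G' f 1 c i < payoff G f 1 c i := by
  set R := Finset.univ.filter fun l => l ≠ i ∧ G.Reachable i l
  set R' := Finset.univ.filter fun l => l ≠ i ∧ G'.Reachable i l
  have hR' : R' ⊆ R := fun l => by
    simp only [R, R', Finset.mem_filter, Finset.mem_univ, true_and]
    exact fun hl => ⟨hl.1, hl.2.mono hle⟩
  have hS_sub : S ⊆ R \ R' := fun l hl => by
    obtain ⟨hGl, hG'l⟩ := hS l hl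
    simp only [R, R', Finset.mem_sdiff, Finset.mem_filter, Finset.mem_univ, true_and]
    exact ⟨⟨fun h => hG'l (h ▸ Reachable.refl _), hGl⟩, fun h => hG'l h.2⟩
  have hsum : ∑ l ∈ R', f l + c < ∑ l ∈ R, f l := by
    rw [← Finset.sum_sdiff hR']
    have := Finset.sum_le_sum_of_subset_of_nonneg hS_sub fun l _ _ => hf l
    linarith
  have hdegR : (G.degree i : ℝ) = G'.degree i + 1 := by exact_mod_cast hdeg.symm
  rw [payoff_one, payoff_one, hdegR]
  linarith

lemma eventually_severanceProof_of_one {V : Type*} [Fintype V] (G : SimpleGraph V)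
    (f : V → ℝ) (c : ℝ)
    (h : ∀ i, ∀ e ∈ G.edgeSet, i ∈ e → payoff (G.deleteEdges {e}) f 1 c i < payoff G f 1 c i) :
    ∀ᶠ δ in nhds 1, SeveranceProof G f δ c := by
  simp only [SeveranceProof, Filter.eventually_all]
  intro i e he hie
  filter_upwards [((continuous_payoff G f c i).sub (continuous_payoff _ f c i)).continuousAt
    |>.eventually (lt_mem_nhds (sub_pos.2 (h i e he hie)))] with δ hδ
  exact (sub_pos.1 hδ).le

section Path

variable {N : ℕ} {P : SimpleGraph (Fin N)}
  (hP : ∀ a b : Fin N, P.Adj a b ↔ (a.val + 1 = b.val ∨ b.val + 1 = a.val))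
include hP

lemma path_reachable (i j : Fin N) : P.Reachable i j := by
  have from_zero : ∀ m (hm : m < N), P.Reachable ⟨0, by omega⟩ ⟨m, hm⟩ := by
    intro m
    induction m with
    | zero => exact fun _ => Reachable.refl _
    | succ m ih => exact fun hm => (ih (by omega)).trans ((hP _ _).2 (Or.inl rfl)).reachable
  exact (from_zero i i.2).symm.trans (from_zero j j.2)

lemma path_deleteEdges_reachable_lt_iff {a b : Fin N} (hab : a.val + 1 = b.val) {x y : Fin N}
    (hxy : (P.deleteEdges {s(a, b)}).Reachable x y) : x.val < b.val ↔ y.val < b.val := by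
  obtain ⟨w⟩ := hxy
  induction w with
  | nil => exact Iff.rfl
  | @cons x z y hxz _ ih =>
    refine Iff.trans ?_ ih
    rw [SimpleGraph.deleteEdges_adj, Set.mem_singleton_iff, hP] at hxz
    obtain ⟨hadj, hne⟩ := hxz
    by_contra hside
    refine hne ?_
    rcases hadj with h | h
    · rw [show x = a from Fin.ext (by omega), show z = b from Fin.ext (by omega)]
    · rw [show x = b from Fin.ext (by omega), show z = a from Fin.ext (by omega), Sym2.eq_swap]

lemma path_payoff_deleteEdges_one_lt {f : Fin N → ℝ} (hf : ∀ v, 0 < f v) {c : ℝ}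
    (hcut : ∀ k : ℕ, 0 < k → k < N →
      (∑ l ∈ Finset.univ.filter (fun l : Fin N => l.val < k), f l) > c ∧
      (∑ l ∈ Finset.univ.filter (fun l : Fin N => k ≤ l.val), f l) > c)
    {i j : Fin N} (hij : P.Adj i j) :
    payoff (P.deleteEdges {s(i, j)}) f 1 c i < payoff P f 1 c i := by
  -- `convert` reconciles the classical `DecidableRel` instance used by `payoff` with Mathlib's
  have lose := payoff_one_lt_of_le (P.deleteEdges_le _) f (fun v => (hf v).le) c
    (by convert degree_deleteEdges_add_one hij)
  rcases (hP i j).1 hij with h | h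
  · refine lose (Finset.univ.filter fun l => j.val ≤ l.val)
      (fun l hl => ⟨path_reachable hP i l, fun hr => ?_⟩) (hcut j (by omega) j.2).2
    have := (path_deleteEdges_reachable_lt_iff hP h hr).1 (by omega)
    simp only [Finset.mem_filter, Finset.mem_univ, true_and] at hl
    omega
  · refine lose (Finset.univ.filter fun l => l.val < i.val)
      (fun l hl => ⟨path_reachable hP i l, fun hr => ?_⟩) (hcut i (by omega) i.2).1
    rw [Sym2.eq_swap] at hr
    simp only [Finset.mem_filter, Finset.mem_univ, true_and] at hl
    exact lt_irrefl _ ((path_deleteEdges_reachable_lt_iff hP h hr).2 hl)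

end Path

theorem path_severanceProof_for_delta_close_to_one_general
    (N : ℕ) (P : SimpleGraph (Fin N))
    (hP : ∀ a b : Fin N, P.Adj a b ↔ (a.val + 1 = b.val ∨ b.val + 1 = a.val))
    (f : Fin N → ℝ) (hf : ∀ v, 0 < f v) (c : ℝ)
    (hcut : ∀ k : ℕ, 0 < k → k < N →
      (∑ l ∈ Finset.univ.filter (fun l : Fin N => l.val < k), f l) > c ∧
      (∑ l ∈ Finset.univ.filter (fun l : Fin N => k ≤ l.val), f l) > c) :
    ∃ δ₀ : ℝ, 0 < δ₀ ∧ δ₀ < 1 ∧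
      ∀ δ : ℝ, δ₀ < δ → δ < 1 → SeveranceProof P f δ c := by
  have stable_at_one : ∀ i, ∀ e ∈ P.edgeSet, i ∈ e →
      payoff (P.deleteEdges {e}) f 1 c i < payoff P f 1 c i := by
    intro i e he hie
    obtain ⟨j, rfl⟩ := Sym2.mem_iff_exists.1 hie
    exact path_payoff_deleteEdges_one_lt hP hf hcut he
  obtain ⟨δ₀, hδ₀, hstable⟩ :=
    (mem_nhdsLT_iff_exists_mem_Ico_Ioo_subset (by norm_num : (1 / 2 : ℝ) < 1)).1
      (mem_nhdsWithin_of_mem_nhds (eventually_severanceProof_of_one P f c stable_at_one))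
  exact ⟨δ₀, by linarith [hδ₀.1], hδ₀.2, fun δ h₀ h₁ => hstable ⟨h₀, h₁⟩⟩

/-- The path graph on `Fin N` (vertices `0, 1, …, N-1`, edges between consecutive
vertices) is severance-proof for all `δ` close enough to `1`, provided that for
every edge the total value on each side of the edge exceeds the link cost `c`. -/
theorem path_severanceProof_for_delta_close_to_one
    (N : ℕ) (hN : 2 ≤ N) (P : SimpleGraph (Fin N))
    (hP : ∀ a b : Fin N, P.Adj a b ↔ (a.val + 1 = b.val ∨ b.val + 1 = a.val))
    (f : Fin N → ℝ) (hf : ∀ v, 0 < f v) (c : ℝ) (hc : 0 < c)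
    (hcut : ∀ k : ℕ, 0 < k → k < N →
      (∑ l ∈ Finset.univ.filter (fun l : Fin N => l.val < k), f l) > c ∧
      (∑ l ∈ Finset.univ.filter (fun l : Fin N => k ≤ l.val), f l) > c) :
    ∃ δ₀ : ℝ, 0 < δ₀ ∧ δ₀ < 1 ∧
      ∀ δ : ℝ, δ₀ < δ → δ < 1 → SeveranceProof P f δ c :=
  path_severanceProof_for_delta_close_to_one_general N P hP f hf c hcut
end

section
/- Let C be the cycle graph on a finite vertex set V with |V| = N ≥ 3, and suppose some vertex i satisfies f(i) ≥ c. If C is severance-proof, then both neighbors of i in C have strictly positive payoff, every vertex has nonnegative payoff, and hence the social welfare Σ_{w ∈ V} u_w(C) is strictly positive. -/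
open scoped Classical

/-!
Severing a link of an agent `w` of degree two saves `c`, so severance-proofness bounds `c` by the
benefit `w` loses with each of its two links. A shortest path from `w` leaves `w` along only one of
them, so every other agent's contribution survives the deletion of at least one of the two links;
and in a cycle the neighbour `w + 1` stays reachable the long way round after deleting either link,
so it is counted twice. Hence the two losses add up to strictly less than `w`'s total benefit, and
`w`'s payoff, its total benefit minus `2 c`, is positive.
-/

namespace SimpleGraph

variable {V : Type*} {G : SimpleGraph V}

lemma degree_deleteEdges_add_one_s15 {u x : V} [Fintype (G.neighborSet u)]
    [Fintype ((G.deleteEdges {s(u, x)}).neighborSet u)] (hx : G.Adj u x) :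
    (G.deleteEdges {s(u, x)}).degree u + 1 = G.degree u := by
  have : (G.deleteEdges {s(u, x)}).neighborFinset u = (G.neighborFinset u).erase x := by
    ext v
    simp only [mem_neighborFinset, deleteEdges_adj, Set.mem_singleton_iff, Finset.mem_erase,
      Sym2.eq_iff]
    grind [G.ne_of_adj]
  rw [← card_neighborFinset_eq_degree, ← card_neighborFinset_eq_degree, this,
    Finset.card_erase_add_one (by simpa using hx)]

variable [Fintype V]

noncomputable def connectionBenefit (G : SimpleGraph V) (f : V → ℝ) (δ : ℝ) (u v : V) :
    ℝ :=
  if v ≠ u ∧ G.Reachable u v then δ ^ (G.dist u v - 1) * f v else 0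

lemma payoff_eq_sum_connectionBenefit (f : V → ℝ) (δ c : ℝ) (u : V)
    [Fintype (G.neighborSet u)] :
    payoff G f δ c u = ∑ v, G.connectionBenefit f δ u v - c * G.degree u := by
  unfold payoff connectionBenefit
  congr!

section connectionBenefit

variable {f : V → ℝ} {δ : ℝ} {u v x y : V}

lemma connectionBenefit_nonneg (hf : 0 ≤ f v) (hδ : 0 ≤ δ) :
    0 ≤ G.connectionBenefit f δ u v := by
  unfold connectionBenefit
  split_ifs <;> positivity

lemma connectionBenefit_pos (hvu : v ≠ u) (hr : G.Reachable u v) (hf : 0 < f v) (hδ : 0 < δ) :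
    0 < G.connectionBenefit f δ u v := by
  rw [connectionBenefit, if_pos ⟨hvu, hr⟩]
  positivity

lemma connectionBenefit_deleteEdges_of_notMem_edges {e : Sym2 V} (p : G.Walk u v)
    (hp : p.length = G.dist u v) (he : e ∉ p.edges) :
    (G.deleteEdges {e}).connectionBenefit f δ u v = G.connectionBenefit f δ u v := by
  have hp' : ∀ e' ∈ p.edges, e' ∉ ({e} : Set (Sym2 V)) := fun e' he' h => he (h ▸ he')
  let q := p.toDeleteEdges {e} hp'
  have hr : (G.deleteEdges {e}).Reachable u v := ⟨q⟩
  have hdist : (G.deleteEdges {e}).dist u v = G.dist u v :=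
    le_antisymm ((dist_le q).trans_eq (p.length_transfer _ ▸ hp))
      (hr.dist_anti (deleteEdges_le _))
  simp only [connectionBenefit, hr, hr.mono (deleteEdges_le _), hdist]

lemma connectionBenefit_deleteEdges_eq_or_eq (hxy : x ≠ y) :
    (G.deleteEdges {s(u, x)}).connectionBenefit f δ u v = G.connectionBenefit f δ u v ∨
      (G.deleteEdges {s(u, y)}).connectionBenefit f δ u v = G.connectionBenefit f δ u v := by
  by_cases hr : G.Reachable u v
  · obtain ⟨p, hpath, hp⟩ := hr.exists_path_of_dist
    by_cases hx : s(u, x) ∈ p.edges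
    · refine .inr (connectionBenefit_deleteEdges_of_notMem_edges p hp fun hy => hxy ?_)
      rw [hpath.eq_snd_of_mem_edges hx, hpath.eq_snd_of_mem_edges hy]
    · exact .inl (connectionBenefit_deleteEdges_of_notMem_edges p hp hx)
  · have hr' : ¬(G.deleteEdges {s(u, x)}).Reachable u v :=
      fun h => hr (h.mono (deleteEdges_le _))
    simp [connectionBenefit, hr, hr']

lemma sum_connectionBenefit_lt_add (hf : ∀ v, 0 ≤ f v) (hfx : 0 < f x) (hδ : 0 < δ)
    (hx : G.Adj u x) (hxy : x ≠ y) (hrx : (G.deleteEdges {s(u, x)}).Reachable u x) :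
    ∑ v, G.connectionBenefit f δ u v <
      ∑ v, (G.deleteEdges {s(u, x)}).connectionBenefit f δ u v +
        ∑ v, (G.deleteEdges {s(u, y)}).connectionBenefit f δ u v := by
  rw [← Finset.sum_add_distrib]
  apply Finset.sum_lt_sum
  · intro v _
    have hbx := connectionBenefit_nonneg (G := G.deleteEdges {s(u, x)}) (u := u) (hf v) hδ.le
    have hby := connectionBenefit_nonneg (G := G.deleteEdges {s(u, y)}) (u := u) (hf v) hδ.le
    rcases connectionBenefit_deleteEdges_eq_or_eq (G := G) (f := f) (δ := δ) (v := v) hxy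
      with h | h <;> linarith
  · refine ⟨x, Finset.mem_univ _, ?_⟩
    have hadj : (G.deleteEdges {s(u, y)}).Adj u x := by simpa [hxy, hx.ne'] using hx
    have hbx := connectionBenefit_pos hx.ne' hrx hfx hδ
    have hby := connectionBenefit_pos hx.ne' hadj.reachable hfx hδ
    rcases connectionBenefit_deleteEdges_eq_or_eq (G := G) (f := f) (δ := δ) (v := x) hxy
      with h | h <;> linarith

end connectionBenefit

theorem SeveranceProof.payoff_pos {f : V → ℝ} {δ c : ℝ} {u x y : V}
    (hG : SeveranceProof G f δ c) (hf : ∀ v, 0 ≤ f v) (hfx : 0 < f x) (hδ : 0 < δ)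
    (hx : G.Adj u x) (hy : G.Adj u y) (hxy : x ≠ y) (hdeg : G.degree u = 2)
    (hrx : (G.deleteEdges {s(u, x)}).Reachable u x) :
    0 < payoff G f δ c u := by
  have hsx := hG u s(u, x) hx (Sym2.mem_mk_left _ _)
  have hsy := hG u s(u, y) hy (Sym2.mem_mk_left _ _)
  have hdx : (G.deleteEdges {s(u, x)}).degree u = 1 := by
    have := degree_deleteEdges_add_one_s15 hx; omega
  have hdy : (G.deleteEdges {s(u, y)}).degree u = 1 := by
    have := degree_deleteEdges_add_one_s15 hy; omega
  have hsum := sum_connectionBenefit_lt_add hf hfx hδ hx hxy hrx (y := y)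
  simp only [payoff_eq_sum_connectionBenefit, hdeg, hdx, hdy, Nat.cast_ofNat, Nat.cast_one]
    at hsx hsy ⊢
  linarith

end SimpleGraph

lemma ZMod.natCast_ne_zero_of_pos_of_lt {n t : ℕ} (h0 : 0 < t) (hlt : t < n) :
    (t : ZMod n) ≠ 0 := by
  rw [Ne, ZMod.natCast_eq_zero_iff]
  exact Nat.not_dvd_of_pos_of_lt h0 hlt

section Cycle

open SimpleGraph

variable {N : ℕ} {C : SimpleGraph (ZMod N)}

def IsZModCycle (C : SimpleGraph (ZMod N)) : Prop :=
  ∀ a b : ZMod N, C.Adj a b ↔ a - b = 1 ∨ b - a = 1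

lemma add_one_ne_sub_one (hN : 3 ≤ N) (w : ZMod N) : w + 1 ≠ w - 1 := fun h =>
  ZMod.natCast_ne_zero_of_pos_of_lt two_pos (by omega : 2 < N) (by push_cast; linear_combination h)

lemma IsZModCycle.adj_add_one (hC : IsZModCycle C) (w : ZMod N) : C.Adj w (w + 1) :=
  (hC _ _).2 (.inr (add_sub_cancel_left w 1))

lemma IsZModCycle.adj_sub_one (hC : IsZModCycle C) (w : ZMod N) : C.Adj w (w - 1) :=
  (hC _ _).2 (.inl (sub_sub_cancel w 1))

lemma IsZModCycle.degree_eq_two (hC : IsZModCycle C) (hN : 3 ≤ N) (w : ZMod N)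
    [Fintype (C.neighborSet w)] : C.degree w = 2 := by
  have hnbr : C.neighborFinset w = {w + 1, w - 1} := by
    ext v
    rw [mem_neighborFinset, hC w v, Finset.mem_insert, Finset.mem_singleton]
    constructor
    · rintro (h | h)
      · exact .inr (by linear_combination -h)
      · exact .inl (by linear_combination h)
    · rintro (rfl | rfl)
      · exact .inr (by ring)
      · exact .inl (by ring)
  rw [← card_neighborFinset_eq_degree, hnbr, Finset.card_pair (add_one_ne_sub_one hN w)]

lemma IsZModCycle.reachable_deleteEdges_add_one (hC : IsZModCycle C) (hN : 3 ≤ N)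
    (w : ZMod N) : (C.deleteEdges {s(w, w + 1)}).Reachable w (w + 1) := by
  have hwalk : ∀ k < N, (C.deleteEdges {s(w, w + 1)}).Reachable w (w - k) := by
    intro k
    induction k with
    | zero => simp
    | succ k ih =>
      intro hk
      refine (ih (by omega)).trans (Adj.reachable ?_)
      rw [deleteEdges_adj, Set.mem_singleton_iff, Sym2.eq_iff]
      refine ⟨(hC _ _).2 (.inl (by push_cast; ring)), ?_⟩
      push_cast
      rintro (⟨h₁, h₂⟩ | ⟨h₁, -⟩)
      · exact add_one_ne_sub_one hN w (by linear_combination h₁ - h₂)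
      · exact ZMod.natCast_ne_zero_of_pos_of_lt k.succ_pos hk
          (by push_cast; linear_combination -h₁)
  convert hwalk (N - 1) (by omega) using 1
  rw [Nat.cast_sub (by omega), ZMod.natCast_self]
  ring

theorem SeveranceProof.payoff_pos_of_isZModCycle [NeZero N] {f : ZMod N → ℝ} {δ c : ℝ}
    (hG : SeveranceProof C f δ c) (hC : IsZModCycle C) (hN : 3 ≤ N) (hf : ∀ v, 0 < f v)
    (hδ : 0 < δ) (w : ZMod N) : 0 < payoff C f δ c w :=
  hG.payoff_pos (fun v => (hf v).le) (hf _) hδ (hC.adj_add_one w) (hC.adj_sub_one w)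
    (add_one_ne_sub_one hN w) (hC.degree_eq_two hN w) (hC.reachable_deleteEdges_add_one hN w)

end Cycle

theorem cycle_with_highValue_positive_welfare_general
    (N : ℕ) (hN : 3 ≤ N) [NeZero N] (C : SimpleGraph (ZMod N))
    (hC : ∀ a b : ZMod N, C.Adj a b ↔ a - b = 1 ∨ b - a = 1)
    (f : ZMod N → ℝ) (hf : ∀ v, 0 < f v) (δ : ℝ) (hδ0 : 0 < δ)
    (c : ℝ)
    (i : ZMod N)
    (hstable : SeveranceProof C f δ c) :
    payoff C f δ c (i + 1) > 0 ∧ payoff C f δ c (i - 1) > 0 ∧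
      (∀ w : ZMod N, payoff C f δ c w ≥ 0) ∧
      (∑ w : ZMod N, payoff C f δ c w) > 0 := by
  have hpos := hstable.payoff_pos_of_isZModCycle hC hN hf hδ0
  exact ⟨hpos _, hpos _, fun w => (hpos w).le,
    Finset.sum_pos (fun w _ => hpos w) Finset.univ_nonempty⟩

/-- In a severance-proof cycle (wheel) network containing a medium- or high-value
agent `i` (`f i ≥ c`), both neighbors of `i` earn strictly positive payoffs, every
agent earns a nonnegative payoff, and social welfare is strictly positive. -/
theorem cycle_with_highValue_positive_welfare
    (N : ℕ) (hN : 3 ≤ N) [NeZero N] (C : SimpleGraph (ZMod N))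
    (hC : ∀ a b : ZMod N, C.Adj a b ↔ a - b = 1 ∨ b - a = 1)
    (f : ZMod N → ℝ) (hf : ∀ v, 0 < f v) (δ : ℝ) (hδ0 : 0 < δ) (hδ1 : δ < 1)
    (c : ℝ) (hc : 0 < c)
    (i : ZMod N) (hi : f i ≥ c)
    (hstable : SeveranceProof C f δ c) :
    payoff C f δ c (i + 1) > 0 ∧ payoff C f δ c (i - 1) > 0 ∧
      (∀ w : ZMod N, payoff C f δ c w ≥ 0) ∧
      (∑ w : ZMod N, payoff C f δ c w) > 0 :=
  cycle_with_highValue_positive_welfare_general N hN C hC f hf δ hδ0 c i hstable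
end
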